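/- Fix an integer r ≥ 1. The 4-color Ramsey number of the matching rK_2 equals 5r − 3. That is: (1) for every coloring of the edges of the complete graph K_{5r−3} with 4 colors, some color class contains r pairwise disjoint edges; and (2) there exists a coloring of the edges of K_{5r−4} with 4 colors in which no color class contains r pairwise disjoint edges. -/

import Mathlib

open Finset

/-- Two edges of a complete graph (elements of `Sym2 (Fin n)`) are disjoint if they
share no vertex. -/
def EdgeDisjoint {n : ℕ} (e f : Sym2 (Fin n)) : Prop := ∀ v, v ∈ e → v ∉ f

/-- A finite set of elements of `Sym2 (Fin n)` is a matching if each element is a genuine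
(non-loop) edge and the edges are pairwise disjoint. -/
def IsMatchingIn {n : ℕ} (M : Finset (Sym2 (Fin n))) : Prop :=
  (∀ e ∈ M, ¬ e.IsDiag) ∧ (M : Set (Sym2 (Fin n))).Pairwise EdgeDisjoint

/-- A history of the online Ramsey game on `K_n` with `t` colours: the list of
edges played so far, each together with the colour Painter gave it. -/
abbrev GameHistory (n t : ℕ) := List (Sym2 (Fin n) × Fin t)

/-- A Builder strategy: given the history so far, select the next edge. -/
abbrev BuilderStrategy (n t : ℕ) := GameHistory n t → Sym2 (Fin n)

/-- A Painter strategy: given the history so far and the newly selected edge,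
choose a colour for it. -/
abbrev PainterStrategy (n t : ℕ) := GameHistory n t → Sym2 (Fin n) → Fin t

/-- The history after `k` moves when Builder plays strategy `B` against Painter
strategy `P`. -/
def gamePlay {n t : ℕ} (B : BuilderStrategy n t) (P : PainterStrategy n t) :
    ℕ → GameHistory n t
  | 0 => []
  | k + 1 =>
      let h := gamePlay B P k
      h ++ [(B h, P h (B h))]

/-- Builder plays legally for the first `k` moves against `P`: every selected edge
is a genuine (non-loop) edge not selected before. -/
def BuilderValid {n t : ℕ} (B : BuilderStrategy n t) (P : PainterStrategy n t)
    (k : ℕ) : Prop :=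
  ∀ j < k, ¬ (B (gamePlay B P j)).IsDiag ∧
    B (gamePlay B P j) ∉ (gamePlay B P j).map Prod.fst

/-- The history `h` contains, for some colour `i`, a matching of `r i` edges all
coloured `i`. -/
def HistoryHasMatching (n t : ℕ) (r : Fin t → ℕ) (h : GameHistory n t) : Prop :=
  ∃ i : Fin t, ∃ M : Finset (Sym2 (Fin n)),
    M.card = r i ∧ IsMatchingIn M ∧ ∀ e ∈ M, (e, i) ∈ h

/-- Builder can force, within `k` legal moves on `K_n` with `t` colours, some colour
`i` to contain a matching of `r i` edges, against every Painter strategy. -/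
def BuilderWinsIn (n t : ℕ) (r : Fin t → ℕ) (k : ℕ) : Prop :=
  ∃ B : BuilderStrategy n t, (∀ P : PainterStrategy n t, BuilderValid B P k) ∧
    ∀ P : PainterStrategy n t, HistoryHasMatching n t r (gamePlay B P k)

/-- The restricted online Ramsey number `R̃(r₁K₂,…,r_tK₂; n)`: the least `k` such
that Builder can force a win within `k` moves. -/
noncomputable def restrictedOnlineRamsey (n t : ℕ) (r : Fin t → ℕ) : ℕ :=
  sInf {k | BuilderWinsIn n t r k}

/-- A colouring `c` of (the edges of) `K_N` with `t` colours contains, for some colour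
`i`, a matching of `r i` edges all coloured `i`. -/
def ColoringHasMatching (N t : ℕ) (r : Fin t → ℕ) (c : Sym2 (Fin N) → Fin t) : Prop :=
  ∃ i : Fin t, ∃ M : Finset (Sym2 (Fin N)),
    M.card = r i ∧ IsMatchingIn M ∧ ∀ e ∈ M, c e = i

/-- The classical Ramsey number `R(r₁K₂,…,r_tK₂)`: the least `N` such that every
`t`-colouring of the edges of `K_N` contains, for some `i`, a matching of `r i`
edges in colour `i`. -/
noncomputable def matchingRamsey (t : ℕ) (r : Fin t → ℕ) : ℕ :=
  sInf {N | ∀ c : Sym2 (Fin N) → Fin t, ColoringHasMatching N t r c}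

/-!
For a colouring of the edges on a vertex set `S`, let `ν_c` be the matching number of the colour
class `c`. The Cockayne–Lorimer inequality `#S ≤ ∑ ν_c + max ν_c + 1` is proved by induction on
`S`. If some vertex is covered by every maximum matching of some colour, deleting it lowers
`∑ ν_c`. Otherwise, fix a colour `c` and a maximum matching `M`. An exchange along alternating
paths (as in Gallai's lemma) shows that no vertex has two colour-`c` neighbours missed by `M`.
So at most `2ν_c` edges leave the `2ν_c` vertices of `M`, and the class has at most
`C(2ν_c + 1, 2)` edges. Summing over the colours contradicts `#S ≥ ∑ ν_c + max ν_c + 2`.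
With four colours and every `ν_c ≤ r - 1`, the inequality gives `#S ≤ 5r - 4`.

For the lower bound, split the `5r - 4` vertices into a block `B₀` of size `2r - 1` and blocks
`B₁, B₂, B₃` of size `r - 1`, and give each edge the larger index of the blocks of its ends.
Every edge of colour `i > 0` has an end in `Bᵢ`, and every edge of colour `0` lies inside `B₀`.
-/

section Matching

variable {n : ℕ} {M A B : Finset (Sym2 (Fin n))}

lemma isMatchingIn_empty : IsMatchingIn (∅ : Finset (Sym2 (Fin n))) :=
  ⟨by simp, by simp⟩

lemma IsMatchingIn.subset (hM : IsMatchingIn M) {T : Finset (Sym2 (Fin n))} (hT : T ⊆ M) :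
    IsMatchingIn T :=
  ⟨fun e he => hM.1 e (hT he), hM.2.mono (coe_subset.2 hT)⟩

lemma IsMatchingIn.insert (hM : IsMatchingIn M) {a b : Fin n} (hab : a ≠ b)
    (ha : ∀ e ∈ M, a ∉ e) (hb : ∀ e ∈ M, b ∉ e) : IsMatchingIn (insert s(a, b) M) := by
  refine ⟨?_, ?_⟩
  · simpa [hab] using hM.1
  · rw [coe_insert, Set.pairwise_insert]
    refine ⟨hM.2, fun e he _ => ⟨?_, ?_⟩⟩
    · rintro v hv hve
      rcases Sym2.mem_iff.1 hv with rfl | rfl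
      exacts [ha e he hve, hb e he hve]
    · rintro v hve hv
      rcases Sym2.mem_iff.1 hv with rfl | rfl
      exacts [ha e he hve, hb e he hve]

lemma IsMatchingIn.card_filter_mem_le_one (hM : IsMatchingIn M) (v : Fin n) :
    #{e ∈ M | v ∈ e} ≤ 1 :=
  card_le_one.2 fun e he f hf => by
    simp only [mem_filter] at he hf
    by_contra hef
    exact hM.2 he.1 hf.1 hef v he.2 hf.2

lemma IsMatchingIn.card_biUnion_toFinset (hM : IsMatchingIn M) :
    #(M.biUnion Sym2.toFinset) = 2 * #M := by
  rw [card_biUnion, sum_congr rfl fun e he => Sym2.card_toFinset_of_not_isDiag e (hM.1 e he),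
    sum_const, smul_eq_mul, mul_comm]
  exact fun e he f hf hef => disjoint_left.2 fun v hve hvf =>
    hM.2 he hf hef v (Sym2.mem_toFinset.1 hve) (Sym2.mem_toFinset.1 hvf)

lemma IsMatchingIn.sdiff_union_inter (hA : IsMatchingIn A) (hB : IsMatchingIn B)
    {R : Finset (Fin n)} (hR : ∀ e ∈ symmDiff A B, ∀ v ∈ e, v ∈ R → e ∈ R.sym2) :
    IsMatchingIn (A \ R.sym2 ∪ B ∩ R.sym2) := by
  have cross : ∀ e ∈ A \ R.sym2, ∀ f ∈ B ∩ R.sym2, EdgeDisjoint e f := by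
    intro e he f hf v hve hvf
    rw [mem_sdiff] at he
    rw [mem_inter] at hf
    have hvR : v ∈ R := mem_sym2_iff.1 hf.2 v hvf
    by_cases heB : e ∈ B
    · exact hB.2 heB hf.1 (fun h => he.2 (h ▸ hf.2)) v hve hvf
    · exact he.2 (hR e (mem_symmDiff.2 (Or.inl ⟨he.1, heB⟩)) v hve hvR)
  refine ⟨fun e he => ?_, fun e he f hf hef => ?_⟩
  · rcases mem_union.1 he with he | he
    exacts [hA.1 e (mem_sdiff.1 he).1, hB.1 e (mem_inter.1 he).1]
  · rw [mem_coe, mem_union] at he hf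
    rcases he with he | he <;> rcases hf with hf | hf
    · exact hA.2 (mem_sdiff.1 he).1 (mem_sdiff.1 hf).1 hef
    · exact cross e he f hf
    · exact fun v hve hvf => cross f hf e he v hvf hve
    · exact hB.2 (mem_inter.1 he).1 (mem_inter.1 hf).1 hef

end Matching

namespace MatchingRamsey

variable {n : ℕ}

section ColorClass

def edgesIn (S : Finset (Fin n)) : Finset (Sym2 (Fin n)) := {e ∈ S.sym2 | ¬ e.IsDiag}

lemma card_edgesIn (S : Finset (Fin n)) : #(edgesIn S) = (#S).choose 2 := by
  rw [edgesIn, sym2_eq_image, Sym2.filter_image_mk_not_isDiag, Sym2.card_image_offDiag]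

variable {κ : Type*} [DecidableEq κ]

def colorClass (χ : Sym2 (Fin n) → κ) (c : κ) (S : Finset (Fin n)) : Finset (Sym2 (Fin n)) :=
  {e ∈ edgesIn S | χ e = c}

noncomputable def matchingNumber (χ : Sym2 (Fin n) → κ) (c : κ) (S : Finset (Fin n)) : ℕ :=
  open Classical in ({M ∈ (colorClass χ c S).powerset | IsMatchingIn M}).sup card

def IsMaximumMatching (χ : Sym2 (Fin n) → κ) (c : κ) (S : Finset (Fin n))
    (M : Finset (Sym2 (Fin n))) : Prop :=
  IsMatchingIn M ∧ M ⊆ colorClass χ c S ∧ #M = matchingNumber χ c S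

variable {χ : Sym2 (Fin n) → κ} {c : κ} {S T : Finset (Fin n)}

lemma mk_mem_colorClass {a b : Fin n} :
    s(a, b) ∈ colorClass χ c S ↔ a ∈ S ∧ b ∈ S ∧ a ≠ b ∧ χ s(a, b) = c := by
  simp [colorClass, edgesIn, and_assoc]

lemma colorClass_mono (hST : S ⊆ T) : colorClass χ c S ⊆ colorClass χ c T :=
  filter_subset_filter _ (filter_subset_filter _ (sym2_mono hST))

lemma card_le_matchingNumber {M : Finset (Sym2 (Fin n))} (hM : IsMatchingIn M)
    (hMS : M ⊆ colorClass χ c S) : #M ≤ matchingNumber χ c S := by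
  classical
  exact le_sup (f := card) (mem_filter.2 ⟨mem_powerset.2 hMS, hM⟩)

variable (χ c) in
lemma exists_isMaximumMatching (S : Finset (Fin n)) : ∃ M, IsMaximumMatching χ c S M := by
  classical
  obtain ⟨M, hM, hcard⟩ := exists_mem_eq_sup {M ∈ (colorClass χ c S).powerset | IsMatchingIn M}
    ⟨∅, mem_filter.2 ⟨empty_mem_powerset _, isMatchingIn_empty⟩⟩ card
  rw [mem_filter, mem_powerset] at hM
  exact ⟨M, hM.2, hM.1, hcard.symm⟩

lemma matchingNumber_mono (hST : S ⊆ T) : matchingNumber χ c S ≤ matchingNumber χ c T := by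
  obtain ⟨M, hM, hMS, hcard⟩ := exists_isMaximumMatching χ c S
  exact hcard ▸ card_le_matchingNumber hM (hMS.trans (colorClass_mono hST))

end ColorClass

section Graph

variable {V : Type*}

lemma _root_.SimpleGraph.Reachable.exists_adj_dist_lt {G : SimpleGraph V} {x v : V}
    (hv : G.Reachable x v) (hvx : v ≠ x) :
    ∃ w, G.Adj w v ∧ G.Reachable x w ∧ G.dist x w < G.dist x v := by
  obtain ⟨p, hp⟩ := hv.exists_walk_length_eq_dist
  have hnil : ¬ p.Nil := fun h => hvx h.eq.symm
  refine ⟨p.penultimate, p.adj_penultimate hnil, ⟨p.dropLast⟩, ?_⟩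
  have := SimpleGraph.dist_le p.dropLast
  have := SimpleGraph.Walk.length_dropLast_add_one hnil
  omega

/-- Send each `v ≠ x` of `R` to an edge joining it to a vertex closer to `x`. -/
lemma card_le_card_inter_sym2_add_one [DecidableEq V] {G : SimpleGraph V} {F : Finset (Sym2 V)}
    (hF : ∀ a b, G.Adj a b → s(a, b) ∈ F) {x : V} {R : Finset V}
    (hR : ∀ v, v ∈ R ↔ G.Reachable x v) : #R ≤ #(F ∩ R.sym2) + 1 := by
  have hx : x ∈ R := (hR x).2 .rfl
  suffices #(R.erase x) ≤ #(F ∩ R.sym2) by rw [card_erase_of_mem hx] at this; omega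
  refine card_le_card_of_forall_subsingleton
    (fun v e => ∃ w, e = s(w, v) ∧ G.dist x w < G.dist x v) (fun v hv => ?_) ?_
  · obtain ⟨hvx, hvR⟩ := mem_erase.1 hv
    obtain ⟨w, hwv, hw, hlt⟩ := ((hR v).1 hvR).exists_adj_dist_lt hvx
    refine ⟨s(w, v), mem_inter.2 ⟨hF w v hwv, mem_sym2_iff.2 fun u hu => ?_⟩, w, rfl, hlt⟩
    rcases Sym2.mem_iff.1 hu with rfl | rfl
    exacts [(hR u).2 hw, hvR]
  · rintro e - v ⟨-, w, rfl, hlt⟩ v' ⟨-, w', he, hlt'⟩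
    rcases Sym2.eq_iff.1 he with ⟨-, h⟩ | ⟨rfl, rfl⟩
    exacts [h, by omega]

lemma sum_card_filter_mem_eq_two_mul [DecidableEq V] {F : Finset (Sym2 V)} {R : Finset V}
    (hF : ∀ e ∈ F, ¬ e.IsDiag ∧ e ∈ R.sym2) : ∑ v ∈ R, #{e ∈ F | v ∈ e} = 2 * #F := by
  have := sum_card_bipartiteAbove_eq_sum_card_bipartiteBelow (s := R) (t := F) (r := (· ∈ ·))
  simp only [bipartiteAbove, bipartiteBelow] at this
  rw [this, mul_comm, ← smul_eq_mul, ← sum_const]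
  refine sum_congr rfl fun e he => ?_
  rw [← Sym2.card_toFinset_of_not_isDiag e (hF e he).1]
  congr 1
  ext v
  simpa using fun hv => mem_sym2_iff.1 (hF e he).2 v hv

lemma two_mul_card_add_three_le [DecidableEq V] {F : Finset (Sym2 V)} {R : Finset V}
    (hF : ∀ e ∈ F, ¬ e.IsDiag ∧ e ∈ R.sym2) (hdeg : ∀ v, #{e ∈ F | v ∈ e} ≤ 2)
    {x y z : V} (hx : x ∈ R) (hy : y ∈ R) (hz : z ∈ R) (hxy : x ≠ y) (hxz : x ≠ z)
    (hyz : y ≠ z) (hdx : #{e ∈ F | x ∈ e} ≤ 1) (hdy : #{e ∈ F | y ∈ e} ≤ 1)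
    (hdz : #{e ∈ F | z ∈ e} ≤ 1) : 2 * #F + 3 ≤ 2 * #R := by
  have hy' : y ∈ R.erase x := mem_erase.2 ⟨hxy.symm, hy⟩
  have hz' : z ∈ (R.erase x).erase y := mem_erase.2 ⟨hyz.symm, mem_erase.2 ⟨hxz.symm, hz⟩⟩
  have hsum := sum_card_filter_mem_eq_two_mul hF
  rw [← add_sum_erase R _ hx, ← add_sum_erase _ _ hy', ← add_sum_erase _ _ hz'] at hsum
  have hrest := sum_le_card_nsmul (((R.erase x).erase y).erase z) _ 2 fun v _ => hdeg v
  have hcard : 0 < #((R.erase x).erase y) := card_pos.2 ⟨z, hz'⟩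
  rw [card_erase_of_mem hz', card_erase_of_mem hy', card_erase_of_mem hx] at hrest
  rw [card_erase_of_mem hy', card_erase_of_mem hx] at hcard
  rw [smul_eq_mul] at hrest
  omega

lemma mem_sym2_of_reachable [DecidableEq V] {D : Finset (Sym2 V)} {x : V}
    {R : Finset V} (hR : ∀ v, v ∈ R ↔ (SimpleGraph.fromEdgeSet (D : Set (Sym2 V))).Reachable x v)
    {e : Sym2 V} (he : e ∈ D) (hdiag : ¬ e.IsDiag) {v : V} (hve : v ∈ e) (hv : v ∈ R) :
    e ∈ R.sym2 := by
  induction e using Sym2.ind with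
  | _ a b =>
    have hab : (SimpleGraph.fromEdgeSet (D : Set (Sym2 V))).Adj a b := by
      simpa [SimpleGraph.fromEdgeSet_adj] using ⟨he, hdiag⟩
    simp only [mk_mem_sym2_iff, hR] at hv ⊢
    rcases Sym2.mem_iff.1 hve with rfl | rfl
    exacts [⟨hv, hv.trans hab.reachable⟩, ⟨hv.trans hab.symm.reachable, hv⟩]

lemma card_filter_mem_le_add [DecidableEq V] {A B F : Finset (Sym2 V)}
    (hF : F ⊆ A ∪ B) (v : V) : #{e ∈ F | v ∈ e} ≤ #{e ∈ A | v ∈ e} + #{e ∈ B | v ∈ e} :=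
  (card_le_card (filter_subset_filter _ hF)).trans (by rw [filter_union]; exact card_union_le _ _)

end Graph

section Inessential

variable {κ : Type*} [DecidableEq κ] {χ : Sym2 (Fin n) → κ} {c : κ} {S : Finset (Fin n)}
  {M N : Finset (Sym2 (Fin n))}

lemma IsMaximumMatching.mk_notMem_colorClass (hM : IsMaximumMatching χ c S M) {a b : Fin n}
    (ha : ∀ e ∈ M, a ∉ e) (hb : ∀ e ∈ M, b ∉ e) : s(a, b) ∉ colorClass χ c S := fun hab => by
  obtain ⟨-, -, hne, -⟩ := mk_mem_colorClass.1 hab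
  have := card_le_matchingNumber (hM.1.insert hne ha hb) (insert_subset hab hM.2.1)
  rw [card_insert_of_notMem fun h => ha _ h (Sym2.mem_mk_left a b), hM.2.2] at this
  omega

lemma IsMaximumMatching.sdiff_union_inter (hM : IsMaximumMatching χ c S M)
    (hN : IsMaximumMatching χ c S N) {R : Finset (Fin n)}
    (hR : ∀ e ∈ symmDiff M N, ∀ v ∈ e, v ∈ R → e ∈ R.sym2) :
    IsMaximumMatching χ c S (M \ R.sym2 ∪ N ∩ R.sym2) := by
  have hMN := hM.1.sdiff_union_inter hN.1 hR
  have hNM := hN.1.sdiff_union_inter hM.1 (by rwa [symmDiff_comm])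
  have h₁ := card_le_matchingNumber hMN
    (union_subset (sdiff_subset.trans hM.2.1) (inter_subset_left.trans hN.2.1))
  have h₂ := card_le_matchingNumber hNM
    (union_subset (sdiff_subset.trans hN.2.1) (inter_subset_left.trans hM.2.1))
  have hM' := card_sdiff_add_card_inter M R.sym2
  have hN' := card_sdiff_add_card_inter N R.sym2
  refine ⟨hMN, union_subset (sdiff_subset.trans hM.2.1) (inter_subset_left.trans hN.2.1), ?_⟩
  rw [card_union_of_disjoint (disjoint_sdiff_self_left.mono_right inter_subset_right)] at h₁ h₂ ⊢
  have := hM.2.2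
  have := hN.2.2
  omega

/-- Exchanging `M` for a maximum matching `N` missing `x` on the component of `x` in `M ∆ N`
gives a maximum matching missing `x` and every `M`-uncovered vertex outside that component. -/
lemma IsMaximumMatching.mem_of_mk_mem_colorClass (hM : IsMaximumMatching χ c S M)
    (hN : IsMaximumMatching χ c S N) {x : Fin n} (hxN : ∀ e ∈ N, x ∉ e) {R : Finset (Fin n)}
    (hR : ∀ v, v ∈ R ↔
      (SimpleGraph.fromEdgeSet (↑(symmDiff M N) : Set (Sym2 (Fin n)))).Reachable x v)
    {u : Fin n} (hux : s(u, x) ∈ colorClass χ c S) (hu : ∀ e ∈ M, u ∉ e) : u ∈ R := by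
  have hxR : x ∈ R := (hR x).2 .rfl
  have hclosed : ∀ e ∈ symmDiff M N, ∀ v ∈ e, v ∈ R → e ∈ R.sym2 := by
    refine fun e he v hve hv => mem_sym2_of_reachable (by simpa using hR) he ?_ hve hv
    rcases mem_union.1 (symmDiff_subset_union he) with he | he
    exacts [hM.1.1 e he, hN.1.1 e he]
  by_contra huR
  refine (hM.sdiff_union_inter hN hclosed).mk_notMem_colorClass ?_ ?_ hux
  · intro e he hue
    rcases mem_union.1 he with he | he
    exacts [hu e (mem_sdiff.1 he).1 hue, huR (mem_sym2_iff.1 (mem_inter.1 he).2 u hue)]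
  · intro e he hxe
    rcases mem_union.1 he with he | he
    · obtain ⟨heM, heR⟩ := mem_sdiff.1 he
      exact heR (hclosed e (mem_symmDiff.2 (.inl ⟨heM, fun heN => hxN e heN hxe⟩)) x hxe hxR)
    · exact hxN e (mem_inter.1 he).1 hxe

/-- With `N` a maximum matching missing `x`, both `uᵢ` are reachable from `x` in `M ∆ N`. But the
component of `x` is a path, and `x`, `u₁`, `u₂` would be three of its ends. -/
lemma IsMaximumMatching.eq_of_mk_mem_colorClass
    (hcrit : ∀ v, matchingNumber χ c (S.erase v) = matchingNumber χ c S)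
    (hM : IsMaximumMatching χ c S M) {x u₁ u₂ : Fin n}
    (h₁ : s(u₁, x) ∈ colorClass χ c S) (h₂ : s(u₂, x) ∈ colorClass χ c S)
    (hu₁ : ∀ e ∈ M, u₁ ∉ e) (hu₂ : ∀ e ∈ M, u₂ ∉ e) : u₁ = u₂ := by
  classical
  obtain ⟨N, hN, hNS, hNcard⟩ := exists_isMaximumMatching χ c (S.erase x)
  have hxN : ∀ e ∈ N, x ∉ e := fun e he hx => by
    simpa using mem_sym2_iff.1 (mem_filter.1 (mem_filter.1 (hNS he)).1).1 x hx
  replace hN : IsMaximumMatching χ c S N :=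
    ⟨hN, hNS.trans (colorClass_mono (erase_subset x S)), hNcard.trans (hcrit x)⟩
  set D := symmDiff M N
  set R : Finset (Fin n) := {v | (SimpleGraph.fromEdgeSet (D : Set (Sym2 (Fin n)))).Reachable x v}
  have hR : ∀ v, v ∈ R ↔ (SimpleGraph.fromEdgeSet (D : Set (Sym2 (Fin n)))).Reachable x v :=
    fun v => by simp [R]
  have hxR : x ∈ R := (hR x).2 .rfl
  by_contra hne
  have hle := card_le_card_inter_sym2_add_one (F := D)
    (fun a b hab => ((SimpleGraph.fromEdgeSet_adj _).1 hab).1) hR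
  have hDMN : D ∩ R.sym2 ⊆ M ∪ N := inter_subset_left.trans symmDiff_subset_union
  have hF : ∀ e ∈ D ∩ R.sym2, ¬ e.IsDiag ∧ e ∈ R.sym2 := fun e he => by
    refine ⟨?_, (mem_inter.1 he).2⟩
    rcases mem_union.1 (hDMN he) with he | he
    exacts [hM.1.1 e he, hN.1.1 e he]
  have hdeg := card_filter_mem_le_add hDMN
  have hdeg₂ : ∀ v, #{e ∈ D ∩ R.sym2 | v ∈ e} ≤ 2 := fun v =>
    (hdeg v).trans (add_le_add (hM.1.card_filter_mem_le_one v) (hN.1.card_filter_mem_le_one v))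
  have hdeg₁ : ∀ v, ((∀ e ∈ M, v ∉ e) ∨ ∀ e ∈ N, v ∉ e) → #{e ∈ D ∩ R.sym2 | v ∈ e} ≤ 1 := by
    rintro v (hv | hv) <;> have := hdeg v
    · rw [filter_false_of_mem hv, card_empty, zero_add] at this
      exact this.trans (hN.1.card_filter_mem_le_one v)
    · rw [filter_false_of_mem hv, card_empty, add_zero] at this
      exact this.trans (hM.1.card_filter_mem_le_one v)
  have hlt := two_mul_card_add_three_le hF hdeg₂ hxR
    (hM.mem_of_mk_mem_colorClass hN hxN hR h₁ hu₁) (hM.mem_of_mk_mem_colorClass hN hxN hR h₂ hu₂)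
    (mk_mem_colorClass.1 h₁).2.2.1.symm (mk_mem_colorClass.1 h₂).2.2.1.symm hne
    (hdeg₁ x (.inr hxN)) (hdeg₁ u₁ (.inl hu₁)) (hdeg₁ u₂ (.inl hu₂))
  omega

lemma card_colorClass_le_of_forall_matchingNumber_erase_eq
    (hcrit : ∀ v, matchingNumber χ c (S.erase v) = matchingNumber χ c S) :
    #(colorClass χ c S) ≤ (2 * matchingNumber χ c S + 1).choose 2 := by
  obtain ⟨M, hM⟩ := exists_isMaximumMatching χ c S
  set W := M.biUnion Sym2.toFinset
  have hW : #W = 2 * matchingNumber χ c S := hM.2.2 ▸ hM.1.card_biUnion_toFinset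
  have hunc : ∀ v, v ∉ W → ∀ e ∈ M, v ∉ e := fun v hv e he hve =>
    hv (mem_biUnion.2 ⟨e, he, Sym2.mem_toFinset.2 hve⟩)
  have hinside : #{e ∈ colorClass χ c S | e ∈ W.sym2} ≤ (#W).choose 2 := by
    rw [← card_edgesIn]
    refine card_le_card fun e he => ?_
    obtain ⟨he, heW⟩ := mem_filter.1 he
    exact mem_filter.2 ⟨heW, (mem_filter.1 (mem_filter.1 he).1).2⟩
  -- an edge leaving `W` has exactly one end in `W`, and that end determines it
  have hcross : #{e ∈ colorClass χ c S | e ∉ W.sym2} ≤ #W := by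
    have hend : ∀ e ∈ {e ∈ colorClass χ c S | e ∉ W.sym2}, ∀ w ∈ W, w ∈ e →
        ∃ u, e = s(u, w) ∧ s(u, w) ∈ colorClass χ c S ∧ ∀ f ∈ M, u ∉ f := by
      intro e he w hw hwe
      obtain ⟨he, heW⟩ := mem_filter.1 he
      obtain ⟨u, rfl⟩ := Sym2.mem_iff_exists.1 hwe
      have huW : u ∉ W := fun huW => heW (mk_mem_sym2_iff.2 ⟨hw, huW⟩)
      exact ⟨u, Sym2.eq_swap, Sym2.eq_swap ▸ he, hunc u huW⟩
    refine card_le_card_of_forall_subsingleton (fun e w => w ∈ e) (fun e he => ?_) ?_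
    · obtain ⟨he', heW⟩ := mem_filter.1 he
      induction e using Sym2.ind with
      | _ a b =>
        by_contra! hab
        have ha : a ∉ W := fun ha => hab a ha (Sym2.mem_mk_left a b)
        have hb : b ∉ W := fun hb => hab b hb (Sym2.mem_mk_right a b)
        exact hM.mk_notMem_colorClass (hunc a ha) (hunc b hb) he'
    · rintro w hw e ⟨he, hwe⟩ e' ⟨he', hwe'⟩
      obtain ⟨u, rfl, hu, hu'⟩ := hend e he w hw hwe
      obtain ⟨u', rfl, hv, hv'⟩ := hend e' he' w hw hwe'
      rw [hM.eq_of_mk_mem_colorClass hcrit hu hv hu' hv']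
  rw [← card_filter_add_card_filter_not (· ∈ W.sym2), Nat.choose_succ_succ,
    Nat.choose_one_right, ← hW, add_comm (#W)]
  exact add_le_add hinside hcross

end Inessential

lemma two_mul_choose_two (a : ℕ) : 2 * a.choose 2 = a * (a - 1) := by
  rw [Nat.choose_two_right, Nat.two_mul_div_two_of_even (Nat.even_mul_pred_self a)]

lemma sum_choose_two_lt_choose_two {ι : Type*} (s : Finset ι) (k : ι → ℕ) {m : ℕ}
    (hk : ∀ i ∈ s, k i ≤ m) :
    ∑ i ∈ s, (2 * k i + 1).choose 2 < (∑ i ∈ s, k i + m + 2).choose 2 := by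
  have hterm : ∀ i ∈ s, (2 * k i + 1).choose 2 ≤ k i * (2 * m + 1) := fun i hi => by
    have := two_mul_choose_two (2 * k i + 1)
    have := hk i hi
    rw [Nat.add_sub_cancel] at *
    nlinarith
  have hsum := (sum_le_sum hterm).trans_eq (sum_mul s k (2 * m + 1)).symm
  have := two_mul_choose_two (∑ i ∈ s, k i + m + 2)
  rw [show ∑ i ∈ s, k i + m + 2 - 1 = ∑ i ∈ s, k i + m + 1 by omega] at this
  nlinarith [sq_nonneg ((∑ i ∈ s, k i : ℤ) - m)]

/-- The Cockayne–Lorimer inequality. -/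
theorem card_le_sum_matchingNumber_add_sup {κ : Type*} [Fintype κ] [DecidableEq κ]
    (χ : Sym2 (Fin n) → κ) (S : Finset (Fin n)) :
    #S ≤ ∑ c, matchingNumber χ c S + univ.sup (fun c => matchingNumber χ c S) + 1 := by
  induction S using Finset.strongInduction with
  | _ S ih =>
    by_cases hess : ∃ c v, matchingNumber χ c (S.erase v) < matchingNumber χ c S
    · obtain ⟨c, v, hv⟩ := hess
      have hvS : v ∈ S := by
        by_contra h
        rw [erase_eq_of_notMem h] at hv
        exact hv.false
      have hsum := sum_lt_sum (fun c _ => matchingNumber_mono (erase_subset v S) (χ := χ) (c := c))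
        ⟨c, mem_univ c, hv⟩
      have hsup := sup_mono_fun fun c (_ : c ∈ univ) =>
        matchingNumber_mono (erase_subset v S) (χ := χ) (c := c)
      have := ih _ (erase_ssubset hvS)
      rw [card_erase_of_mem hvS] at this
      omega
    · simp only [not_exists, not_lt] at hess
      have hcrit c v : matchingNumber χ c (S.erase v) = matchingNumber χ c S :=
        (matchingNumber_mono (erase_subset v S)).antisymm (hess c v)
      by_contra! hlt
      have hedges : (#S).choose 2 ≤ ∑ c, (2 * matchingNumber χ c S + 1).choose 2 := by
        rw [← card_edgesIn, card_eq_sum_card_fiberwise fun e _ => mem_univ (χ e)]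
        exact sum_le_sum fun c _ => card_colorClass_le_of_forall_matchingNumber_erase_eq (hcrit c)
      have := sum_choose_two_lt_choose_two univ (fun c => matchingNumber χ c S)
        fun c _ => le_sup (f := fun c => matchingNumber χ c S) (mem_univ c)
      have : (∑ c, matchingNumber χ c S + univ.sup (fun c => matchingNumber χ c S) + 2).choose 2
          ≤ (#S).choose 2 := Nat.choose_le_choose 2 hlt
      omega

theorem coloringHasMatching_of_le {t r N : ℕ} (hN : (t + 1) * (r - 1) + 2 ≤ N)
    (χ : Sym2 (Fin N) → Fin t) : ColoringHasMatching N t (fun _ => r) χ := by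
  by_contra hno
  have hlt (c : Fin t) : matchingNumber χ c univ < r := by
    by_contra! h
    obtain ⟨M, hM, hMS, hcard⟩ := exists_isMaximumMatching χ c univ
    obtain ⟨M', hM'M, hM'card⟩ := exists_subset_card_eq (hcard ▸ h)
    exact hno ⟨c, M', hM'card, hM.subset hM'M, fun e he => (mem_filter.1 (hMS (hM'M he))).2⟩
  have hsum : ∑ c, matchingNumber χ c univ ≤ t * (r - 1) := by
    simpa using sum_le_sum fun c (_ : c ∈ univ) => Nat.le_sub_one_of_lt (hlt c)
  have hsup : univ.sup (fun c => matchingNumber χ c univ) ≤ r - 1 :=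
    Finset.sup_le fun c _ => Nat.le_sub_one_of_lt (hlt c)
  have := card_le_sum_matchingNumber_add_sup χ univ
  rw [card_univ, Fintype.card_fin] at this
  rw [add_one_mul] at hN
  omega

section MaxColoring

variable {m : ℕ} {α : Type*} [LinearOrder α]

def maxColoring (f : Fin m → α) : Sym2 (Fin m) → α :=
  Sym2.lift ⟨fun u v => max (f u) (f v), fun _ _ => max_comm _ _⟩

variable {f : Fin m → α} {M : Finset (Sym2 (Fin m))} {i : α}

lemma card_le_card_filter_of_maxColoring (hM : IsMatchingIn M)
    (hMi : ∀ e ∈ M, maxColoring f e = i) : #M ≤ #{v | f v = i} := by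
  refine card_le_card_of_forall_subsingleton (fun e v => v ∈ e) (fun e he => ?_)
    fun v _ e ⟨he, hve⟩ e' ⟨he', hve'⟩ => by_contra fun hne => hM.2 he he' hne v hve hve'
  have := hMi e he
  induction e using Sym2.ind with
  | _ a b =>
    have hab : max (f a) (f b) = i := this
    rcases max_choice (f a) (f b) with h | h
    · exact ⟨a, by simp [h.symm.trans hab], Sym2.mem_mk_left a b⟩
    · exact ⟨b, by simp [h.symm.trans hab], Sym2.mem_mk_right a b⟩

lemma two_mul_card_le_card_filter_of_maxColoring (hM : IsMatchingIn M) (hi : IsMin i)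
    (hMi : ∀ e ∈ M, maxColoring f e = i) : 2 * #M ≤ #{v | f v = i} := by
  rw [← hM.card_biUnion_toFinset]
  refine card_le_card fun v hv => ?_
  obtain ⟨e, he, hve⟩ := mem_biUnion.1 hv
  have := hMi e he
  rw [Sym2.mem_toFinset] at hve
  induction e using Sym2.ind with
  | _ a b =>
    have h : f v ≤ i := by
      rw [← (this : max (f a) (f b) = i)]
      rcases Sym2.mem_iff.1 hve with rfl | rfl
      exacts [le_max_left _ _, le_max_right _ _]
    simpa using le_antisymm h (hi h)

end MaxColoring

lemma exists_card_filter_le {t N : ℕ} (b : Fin t → ℕ) (hN : N ≤ ∑ i, b i) :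
    ∃ f : Fin N → Fin t, ∀ i, #{v | f v = i} ≤ b i := by
  let g : Fin N → (i : Fin t) × Fin (b i) := fun v => finSigmaFinEquiv.symm (Fin.castLE hN v)
  have hg : g.Injective := finSigmaFinEquiv.symm.injective.comp (Fin.castLE_injective hN)
  refine ⟨fun v => (g v).1, fun i => ?_⟩
  have hfib : ({p | p.1 = i} : Finset ((i : Fin t) × Fin (b i))) =
      univ.map (Function.Embedding.sigmaMk i) := by
    ext ⟨j, x⟩
    simp only [mem_filter, mem_univ, true_and, mem_map, Function.Embedding.sigmaMk_apply]
    constructor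
    · rintro rfl
      exact ⟨x, rfl⟩
    · rintro ⟨y, h⟩
      exact (Sigma.mk.inj_iff.1 h).1.symm
  calc #{v | (g v).1 = i} ≤ #({p | p.1 = i} : Finset ((i : Fin t) × Fin (b i))) :=
        card_le_card_of_injOn g (fun v hv => by simpa using hv) hg.injOn
    _ = b i := by rw [hfib, card_map, card_univ, Fintype.card_fin]

theorem exists_not_coloringHasMatching {t r N : ℕ} (ht : 0 < t) (hr : 1 ≤ r)
    (hN : N ≤ (t + 1) * (r - 1) + 1) :
    ∃ χ : Sym2 (Fin N) → Fin t, ¬ ColoringHasMatching N t (fun _ => r) χ := by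
  set i₀ : Fin t := ⟨0, ht⟩
  obtain ⟨f, hf⟩ := exists_card_filter_le (N := N) (fun i => r - 1 + if i = i₀ then r else 0) (by
    rw [sum_add_distrib, sum_ite_eq', if_pos (mem_univ _), sum_const, card_univ,
      Fintype.card_fin, smul_eq_mul]
    rw [add_one_mul] at hN
    omega)
  refine ⟨maxColoring f, fun ⟨i, M, hcard, hM, hMi⟩ => ?_⟩
  have hfi := hf i
  dsimp only at hcard hfi
  by_cases hi : i = i₀
  · have := two_mul_card_le_card_filter_of_maxColoring (f := f) hM
      (hi ▸ fun j _ => Fin.le_def.2 (Nat.zero_le _)) hMi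
    rw [if_pos hi] at hfi
    omega
  · have := card_le_card_filter_of_maxColoring (f := f) hM hMi
    rw [if_neg hi] at hfi
    omega

end MatchingRamsey

/-- For `r ≥ 1`, the 4-colour Ramsey number of `rK₂` equals `5r − 3`. -/
theorem ramsey_four_colour_matching (r : ℕ) (hr : 1 ≤ r) :
    (∀ c : Sym2 (Fin (5 * r - 3)) → Fin 4,
        ColoringHasMatching (5 * r - 3) 4 (fun _ => r) c) ∧
      (∃ c : Sym2 (Fin (5 * r - 4)) → Fin 4,
        ¬ ColoringHasMatching (5 * r - 4) 4 (fun _ => r) c) :=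
  ⟨MatchingRamsey.coloringHasMatching_of_le (by omega),
    MatchingRamsey.exists_not_coloringHasMatching (by norm_num) hr (by omega)⟩
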